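/- Let N be a positive integer, d a positive divisor of N, and Δ = gcd(d, N/d). Set g_d = [[1,0,0],[d,1,0],[0,0,1]] and v_d = (1,d,0)ᵀ, and let S be the subgroup of Γ₀(N,3) consisting of all γ with γ·v_d = v_d or γ·v_d = −v_d. Then: (i) for every γ ∈ S the matrix g_d⁻¹ γ g_d has vanishing (2,1) and (3,1) entries; (ii) the map π_d : S → GL₂(ℤ) sending γ to the lower-right 2×2 block of g_d⁻¹ γ g_d is a group homomorphism; (iii) the image of π_d is exactly Γ₁(N/d, Δ)^*; and (iv) the kernel of π_d is isomorphic to ℤ × ℤ. -/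

import Mathlib

/-- `SL₃(ℤ)`. -/
abbrev SL3 : Type := Matrix.SpecialLinearGroup (Fin 3) ℤ

/-- The matrix `g_d = [[1,0,0],[d,1,0],[0,0,1]]` as an element of `SL₃(ℤ)`. -/
def gMat (d : ℕ) : SL3 :=
  ⟨!![1, 0, 0; (d : ℤ), 1, 0; 0, 0, 1], by simp [Matrix.det_fin_three]⟩

/-- The subgroup `S` of `Γ₀(N,3) ⊆ SL₃(ℤ)` consisting of the `γ` with
`γ · (1,d,0)ᵀ = ± (1,d,0)ᵀ`. -/
def stabLineGroup (N d : ℕ) : Subgroup SL3 where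
  carrier := {γ |
    ((N : ℤ) ∣ (γ : Matrix (Fin 3) (Fin 3) ℤ) 1 0 ∧
     (N : ℤ) ∣ (γ : Matrix (Fin 3) (Fin 3) ℤ) 2 0) ∧
    ((γ : Matrix (Fin 3) (Fin 3) ℤ).mulVec ![1, (d : ℤ), 0] = ![1, (d : ℤ), 0] ∨
     (γ : Matrix (Fin 3) (Fin 3) ℤ).mulVec ![1, (d : ℤ), 0] = -![1, (d : ℤ), 0])}
  one_mem' := by
    refine ⟨⟨?_, ?_⟩, Or.inl ?_⟩
    · rw [Matrix.SpecialLinearGroup.coe_one, Matrix.one_apply_ne (by decide)]; exact dvd_zero _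
    · rw [Matrix.SpecialLinearGroup.coe_one, Matrix.one_apply_ne (by decide)]; exact dvd_zero _
    · rw [Matrix.SpecialLinearGroup.coe_one, Matrix.one_mulVec]
  mul_mem' := by
    rintro a b ⟨⟨ha1, ha2⟩, hav⟩ ⟨⟨hb1, hb2⟩, hbv⟩
    have hco : ∀ i : Fin 3, ((a * b : SL3) : Matrix (Fin 3) (Fin 3) ℤ) i 0 =
        (a : Matrix (Fin 3) (Fin 3) ℤ) i 0 * (b : Matrix (Fin 3) (Fin 3) ℤ) 0 0 +
        (a : Matrix (Fin 3) (Fin 3) ℤ) i 1 * (b : Matrix (Fin 3) (Fin 3) ℤ) 1 0 +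
        (a : Matrix (Fin 3) (Fin 3) ℤ) i 2 * (b : Matrix (Fin 3) (Fin 3) ℤ) 2 0 := by
      intro i
      rw [Matrix.SpecialLinearGroup.coe_mul, Matrix.mul_apply, Fin.sum_univ_three]
    have hmv : ((a * b : SL3) : Matrix (Fin 3) (Fin 3) ℤ).mulVec ![1, (d : ℤ), 0] =
        (a : Matrix (Fin 3) (Fin 3) ℤ).mulVec
          ((b : Matrix (Fin 3) (Fin 3) ℤ).mulVec ![1, (d : ℤ), 0]) := by
      rw [Matrix.SpecialLinearGroup.coe_mul, Matrix.mulVec_mulVec]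
    refine ⟨⟨?_, ?_⟩, ?_⟩
    · rw [hco 1]
      exact dvd_add (dvd_add (ha1.mul_right _) (hb1.mul_left _)) (hb2.mul_left _)
    · rw [hco 2]
      exact dvd_add (dvd_add (ha2.mul_right _) (hb1.mul_left _)) (hb2.mul_left _)
    · rcases hav with ha | ha <;> rcases hbv with hb | hb
      · left; rw [hmv, hb, ha]
      · right; rw [hmv, hb, Matrix.mulVec_neg, ha]
      · right; rw [hmv, hb, ha]
      · left; rw [hmv, hb, Matrix.mulVec_neg, ha, neg_neg]
  inv_mem' := by
    rintro a ⟨⟨ha1, ha2⟩, hav⟩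
    have hBA : ((a⁻¹ : SL3) : Matrix (Fin 3) (Fin 3) ℤ) * (a : Matrix (Fin 3) (Fin 3) ℤ)
        = 1 := by
      rw [← Matrix.SpecialLinearGroup.coe_mul, inv_mul_cancel,
        Matrix.SpecialLinearGroup.coe_one]
    set A : Matrix (Fin 3) (Fin 3) ℤ := (a : Matrix (Fin 3) (Fin 3) ℤ)
    set B : Matrix (Fin 3) (Fin 3) ℤ := ((a⁻¹ : SL3) : Matrix (Fin 3) (Fin 3) ℤ)
    have key : ∀ i : Fin 3,
        B i 0 * A 0 0 + B i 1 * A 1 0 + B i 2 * A 2 0 =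
          (1 : Matrix (Fin 3) (Fin 3) ℤ) i 0 := by
      intro i
      have h := (Matrix.ext_iff.mpr hBA) i 0
      rwa [Matrix.mul_apply, Fin.sum_univ_three] at h
    have h0 : (N : ℤ) ∣ B 0 0 * A 0 0 - 1 := by
      have h := key 0
      rw [Matrix.one_apply_eq] at h
      have he : B 0 0 * A 0 0 - 1 = -(B 0 1 * A 1 0) - B 0 2 * A 2 0 := by linarith
      rw [he]
      exact dvd_sub (dvd_neg.mpr (ha1.mul_left _)) (ha2.mul_left _)
    have hgen : ∀ i : Fin 3, i ≠ 0 → (N : ℤ) ∣ B i 0 := by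
      intro i hi
      have h := key i
      rw [Matrix.one_apply_ne hi] at h
      have hBi : (N : ℤ) ∣ B i 0 * A 0 0 := by
        have he : B i 0 * A 0 0 = -(B i 1 * A 1 0) - B i 2 * A 2 0 := by linarith
        rw [he]
        exact dvd_sub (dvd_neg.mpr (ha1.mul_left _)) (ha2.mul_left _)
      have he : B i 0 = B 0 0 * (B i 0 * A 0 0) - B i 0 * (B 0 0 * A 0 0 - 1) := by ring
      rw [he]
      exact dvd_sub (hBi.mul_left _) (h0.mul_left _)
    refine ⟨⟨hgen 1 (by decide), hgen 2 (by decide)⟩, ?_⟩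
    have hBv : B.mulVec (A.mulVec ![1, (d : ℤ), 0]) = ![1, (d : ℤ), 0] := by
      rw [Matrix.mulVec_mulVec, hBA, Matrix.one_mulVec]
    rcases hav with ha | ha
    · left; rwa [ha] at hBv
    · right
      rw [ha, Matrix.mulVec_neg] at hBv
      exact neg_eq_iff_eq_neg.mp hBv

/-!
Since `g_d e₁ = v_d`, the condition `γ v_d = ± v_d` says exactly that the first column of
`B = g_d⁻¹ γ g_d` is `± e₁`, i.e. `B` is block upper triangular of shape `(1, 2)`; on such
matrices the lower-right block is multiplicative and `det B = B₁₁ · det (block)`, so the block has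
determinant `B₁₁ = ± 1`. Writing `γ = g_d B g_d⁻¹` and `N = d m`, the `Γ₀(N)` condition on `γ`
becomes `m ∣ B₃₂` and `m ∣ B₁₁ - B₂₂ - d B₁₂`. Hence `Δ = gcd(d, m)` divides `B₂₂ - B₁₁`, and
conversely a block satisfying the `Γ₁(m, Δ)^*` conditions lifts once `B₁₂` is chosen by Bézout.
The kernel consists of the `B` with first row `(1, w, c)` and identity block, where `m ∣ d w`,
i.e. `w` runs over the multiples of `m / gcd(m, d)`; this gives `ℤ × ℤ`.
-/

theorem Int.exists_dvd_sub_mul_of_gcd_dvd {a b t : ℤ} (h : (Int.gcd a b : ℤ) ∣ t) :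
    ∃ x, b ∣ t - a * x := by
  obtain ⟨u, rfl⟩ := h
  exact ⟨Int.gcdA a b * u, Int.gcdB a b * u, by rw [Int.gcd_eq_gcd_ab]; ring⟩

theorem Int.dvd_mul_iff_ediv_gcd_dvd {m a w : ℤ} (hm : 0 < m) :
    m ∣ a * w ↔ m / Int.gcd m a ∣ w := by
  constructor
  · intro h
    apply Int.modEq_zero_iff_dvd.1
    refine Int.ModEq.cancel_left_div_gcd hm (b := 0) ?_
    rw [mul_zero]
    exact Int.modEq_zero_iff_dvd.2 h
  · intro h
    rw [mul_comm a w, ← Int.ediv_mul_cancel (Int.gcd_dvd_left m a)]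
    exact mul_dvd_mul h (Int.gcd_dvd_right m a)

namespace Matrix

variable (n : ℕ) (R : Type*) [CommRing R]

def parabolicSubmonoid : Submonoid (Matrix (Fin (n + 1)) (Fin (n + 1)) R) where
  carrier := {A | ∀ i : Fin n, A i.succ 0 = 0}
  one_mem' i := one_apply_ne (Fin.succ_ne_zero i)
  mul_mem' {_ B} hA hB i := by
    simp [mul_apply, Fin.sum_univ_succ, hA i, show ∀ j : Fin n, B j.succ 0 = 0 from hB]

variable {n R}

theorem mem_parabolicSubmonoid_iff {A : Matrix (Fin (n + 1)) (Fin (n + 1)) R} :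
    A ∈ parabolicSubmonoid n R ↔ ∀ i : Fin n, A i.succ 0 = 0 :=
  Iff.rfl

/-- The block matrix `[[a, v], [0, D]]`. -/
def parabolicMk (a : R) (v : Fin n → R) (D : Matrix (Fin n) (Fin n) R) :
    Matrix (Fin (n + 1)) (Fin (n + 1)) R :=
  of (vecCons (vecCons a v) fun i => vecCons 0 (D i))

theorem parabolicMk_mem (a : R) (v : Fin n → R) (D : Matrix (Fin n) (Fin n) R) :
    parabolicMk a v D ∈ parabolicSubmonoid n R :=
  fun i => by simp [parabolicMk]

@[simp]
theorem submatrix_succ_parabolicMk (a : R) (v : Fin n → R) (D : Matrix (Fin n) (Fin n) R) :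
    (parabolicMk a v D).submatrix Fin.succ Fin.succ = D := by
  ext i j
  simp [parabolicMk]

theorem eq_parabolicMk {A : Matrix (Fin (n + 1)) (Fin (n + 1)) R}
    (hA : A ∈ parabolicSubmonoid n R) :
    A = parabolicMk (A 0 0) (fun j => A 0 j.succ) (A.submatrix Fin.succ Fin.succ) := by
  ext i j
  cases i using Fin.cases <;> cases j using Fin.cases <;> simp [parabolicMk, hA _]

theorem submatrix_succ_mul {A : Matrix (Fin (n + 1)) (Fin (n + 1)) R}
    (hA : A ∈ parabolicSubmonoid n R) (B : Matrix (Fin (n + 1)) (Fin (n + 1)) R) :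
    (A * B).submatrix Fin.succ Fin.succ =
      A.submatrix Fin.succ Fin.succ * B.submatrix Fin.succ Fin.succ := by
  ext i j
  simp [mul_apply, Fin.sum_univ_succ, hA i]

theorem det_eq_mul_det_submatrix_succ {A : Matrix (Fin (n + 1)) (Fin (n + 1)) R}
    (hA : A ∈ parabolicSubmonoid n R) :
    A.det = A 0 0 * (A.submatrix Fin.succ Fin.succ).det := by
  simp [det_succ_column_zero, Fin.sum_univ_succ, hA _]

theorem det_parabolicMk (a : R) (v : Fin n → R) (D : Matrix (Fin n) (Fin n) R) :
    (parabolicMk a v D).det = a * D.det := by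
  rw [det_eq_mul_det_submatrix_succ (parabolicMk_mem a v D), submatrix_succ_parabolicMk]
  rfl

theorem det_submatrix_succ_eq_of_det_eq_one {A : Matrix (Fin (n + 1)) (Fin (n + 1)) ℤ}
    (hA : A ∈ parabolicSubmonoid n ℤ) (hdet : A.det = 1) (h00 : A 0 0 = 1 ∨ A 0 0 = -1) :
    (A.submatrix Fin.succ Fin.succ).det = A 0 0 := by
  rw [det_eq_mul_det_submatrix_succ hA] at hdet
  rcases h00 with h | h <;> rw [h] at hdet ⊢ <;> linarith

def lowerRightBlockHom : parabolicSubmonoid n R →* Matrix (Fin n) (Fin n) R where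
  toFun A := (A : Matrix (Fin (n + 1)) (Fin (n + 1)) R).submatrix Fin.succ Fin.succ
  map_one' := by
    ext i j
    simp [one_apply]
  map_mul' A B := submatrix_succ_mul A.2 B

theorem parabolicMk_one_mul (v w : Fin n → R) :
    parabolicMk 1 v 1 * parabolicMk 1 w 1 =
      parabolicMk 1 (v + w) (1 : Matrix (Fin n) (Fin n) R) := by
  ext i j
  cases i using Fin.cases <;> cases j using Fin.cases <;>
    simp [parabolicMk, mul_apply, Fin.sum_univ_succ, one_apply, add_comm]

theorem parabolicMk_one_injective :
    Function.Injective fun v : Fin n → R => parabolicMk 1 v (1 : Matrix (Fin n) (Fin n) R) :=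
  fun v w h => funext fun j => by simpa [parabolicMk] using congrFun (congrFun h 0) j.succ

def unipotentSL (v : Fin n → R) : SpecialLinearGroup (Fin (n + 1)) R :=
  ⟨parabolicMk 1 v 1, by simp [det_parabolicMk]⟩

theorem unipotentSL_add (v w : Fin n → R) :
    unipotentSL (v + w) = unipotentSL v * unipotentSL w :=
  Subtype.ext (parabolicMk_one_mul v w).symm

@[simp]
theorem unipotentSL_zero : unipotentSL (0 : Fin n → R) = 1 := by
  simpa using unipotentSL_add (0 : Fin n → R) 0

theorem unipotentSL_injective : Function.Injective (unipotentSL (n := n) (R := R)) :=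
  fun _ _ h => parabolicMk_one_injective (congrArg Subtype.val h)

end Matrix

open Matrix

theorem coe_gMat_inv (d : ℕ) :
    (((gMat d)⁻¹ : SL3) : Matrix (Fin 3) (Fin 3) ℤ) = !![1, 0, 0; -(d : ℤ), 1, 0; 0, 0, 1] := by
  rw [Matrix.SpecialLinearGroup.coe_inv, adjugate_fin_three]
  simp [gMat]

theorem gMat_conj_inv_conj (d : ℕ) (γ : SL3) :
    gMat d * ((gMat d)⁻¹ * γ * gMat d) * (gMat d)⁻¹ = γ := by
  group

theorem gMat_inv_conj_conj (d : ℕ) (B : SL3) :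
    (gMat d)⁻¹ * (gMat d * B * (gMat d)⁻¹) * gMat d = B := by
  group

section Conjugation

variable (d : ℕ) (B : SL3)

theorem gMat_conj_mulVec :
    ((gMat d * B * (gMat d)⁻¹ : SL3) : Matrix (Fin 3) (Fin 3) ℤ) *ᵥ ![1, (d : ℤ), 0] =
      ![B 0 0, d * B 0 0 + B 1 0, B 2 0] := by
  rw [Matrix.SpecialLinearGroup.coe_mul, Matrix.SpecialLinearGroup.coe_mul, coe_gMat_inv]
  ext i
  fin_cases i <;> simp [gMat, mulVec, vecMul, dotProduct, mul_apply, Fin.sum_univ_three]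

theorem gMat_conj_apply_one_zero :
    ((gMat d * B * (gMat d)⁻¹ : SL3) : Matrix (Fin 3) (Fin 3) ℤ) 1 0 =
      B 1 0 + d * (B 0 0 - B 1 1 - d * B 0 1) := by
  rw [Matrix.SpecialLinearGroup.coe_mul, Matrix.SpecialLinearGroup.coe_mul, coe_gMat_inv]
  simp [gMat, vecMul, dotProduct, mul_apply, Fin.sum_univ_three]
  ring

theorem gMat_conj_apply_two_zero :
    ((gMat d * B * (gMat d)⁻¹ : SL3) : Matrix (Fin 3) (Fin 3) ℤ) 2 0 = B 2 0 - d * B 2 1 := by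
  rw [Matrix.SpecialLinearGroup.coe_mul, Matrix.SpecialLinearGroup.coe_mul, coe_gMat_inv]
  simp [gMat, vecMul, dotProduct, mul_apply, Fin.sum_univ_three]
  ring

theorem gMat_conj_mulVec_eq_or_eq_neg_iff :
    (((gMat d * B * (gMat d)⁻¹ : SL3) : Matrix (Fin 3) (Fin 3) ℤ) *ᵥ ![1, (d : ℤ), 0] =
        ![1, (d : ℤ), 0] ∨
      ((gMat d * B * (gMat d)⁻¹ : SL3) : Matrix (Fin 3) (Fin 3) ℤ) *ᵥ ![1, (d : ℤ), 0] =
        -![1, (d : ℤ), 0]) ↔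
      (B : Matrix (Fin 3) (Fin 3) ℤ) ∈ parabolicSubmonoid 2 ℤ ∧ (B 0 0 = 1 ∨ B 0 0 = -1) := by
  rw [gMat_conj_mulVec, mem_parabolicSubmonoid_iff, Fin.forall_fin_two]
  simp [funext_iff, Fin.forall_fin_succ]
  grind

end Conjugation

variable {d m : ℕ}

theorem gMat_conj_mem_stabLineGroup_iff (hd : 0 < d) (B : SL3) :
    gMat d * B * (gMat d)⁻¹ ∈ stabLineGroup (d * m) d ↔
      ((B : Matrix (Fin 3) (Fin 3) ℤ) ∈ parabolicSubmonoid 2 ℤ ∧ (B 0 0 = 1 ∨ B 0 0 = -1)) ∧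
        (m : ℤ) ∣ B 0 0 - B 1 1 - d * B 0 1 ∧ (m : ℤ) ∣ B 2 1 := by
  change (_ ∧ _) ∧ _ ↔ _
  rw [gMat_conj_mulVec_eq_or_eq_neg_iff, gMat_conj_apply_one_zero, gMat_conj_apply_two_zero,
    and_comm]
  refine and_congr_right fun ⟨hB, _⟩ => ?_
  have h10 : B 1 0 = 0 := hB 0
  have h20 : B 2 0 = 0 := hB 1
  have hd' : (d : ℤ) ≠ 0 := by positivity
  rw [h10, h20, zero_add, zero_sub, dvd_neg, Nat.cast_mul, mul_dvd_mul_iff_left hd',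
    mul_dvd_mul_iff_left hd']

theorem mem_stabLineGroup_iff (hd : 0 < d) (γ : SL3) :
    γ ∈ stabLineGroup (d * m) d ↔
      ((((gMat d)⁻¹ * γ * gMat d : SL3) : Matrix (Fin 3) (Fin 3) ℤ) ∈ parabolicSubmonoid 2 ℤ ∧
        (((gMat d)⁻¹ * γ * gMat d : SL3) 0 0 = 1 ∨ ((gMat d)⁻¹ * γ * gMat d : SL3) 0 0 = -1)) ∧
      (m : ℤ) ∣ ((gMat d)⁻¹ * γ * gMat d : SL3) 0 0 - ((gMat d)⁻¹ * γ * gMat d : SL3) 1 1 -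
          d * ((gMat d)⁻¹ * γ * gMat d : SL3) 0 1 ∧
        (m : ℤ) ∣ ((gMat d)⁻¹ * γ * gMat d : SL3) 2 1 := by
  conv_lhs => rw [← gMat_conj_inv_conj d γ]
  exact gMat_conj_mem_stabLineGroup_iff hd _

theorem gMat_inv_conj_mem_parabolic {N : ℕ} {γ : SL3} (hγ : γ ∈ stabLineGroup N d) :
    (((gMat d)⁻¹ * γ * gMat d : SL3) : Matrix (Fin 3) (Fin 3) ℤ) ∈ parabolicSubmonoid 2 ℤ := by
  rw [← gMat_conj_inv_conj d γ] at hγ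
  exact ((gMat_conj_mulVec_eq_or_eq_neg_iff d _).1 hγ.2).1

def stabLineConj (N d : ℕ) : stabLineGroup N d →* parabolicSubmonoid 2 ℤ where
  toFun γ := ⟨((gMat d)⁻¹ * γ * gMat d : SL3), gMat_inv_conj_mem_parabolic γ.2⟩
  map_one' := by
    ext : 1
    simp
  map_mul' a b := by
    ext : 1
    simp only [Subgroup.coe_mul, Submonoid.coe_mul, ← Matrix.SpecialLinearGroup.coe_mul]
    group

def stabLineBlockHom (N d : ℕ) : stabLineGroup N d →* GL (Fin 2) ℤ :=
  (lowerRightBlockHom.comp (stabLineConj N d)).toHomUnits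

theorem coe_stabLineBlockHom (N d : ℕ) (γ : stabLineGroup N d) :
    (stabLineBlockHom N d γ : Matrix (Fin 2) (Fin 2) ℤ) =
      (((gMat d)⁻¹ * γ * gMat d : SL3) : Matrix (Fin 3) (Fin 3) ℤ).submatrix Fin.succ Fin.succ :=
  rfl

theorem mem_range_stabLineBlockHom_iff (hd : 0 < d) (M : GL (Fin 2) ℤ) :
    M ∈ (stabLineBlockHom (d * m) d).range ↔
      (((M : Matrix (Fin 2) (Fin 2) ℤ).det = 1 ∨ (M : Matrix (Fin 2) (Fin 2) ℤ).det = -1) ∧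
        (m : ℤ) ∣ (M : Matrix (Fin 2) (Fin 2) ℤ) 1 0 ∧
        ((Nat.gcd d m : ℕ) : ℤ) ∣
          (M : Matrix (Fin 2) (Fin 2) ℤ) 0 0 - (M : Matrix (Fin 2) (Fin 2) ℤ).det) := by
  have hΔm : ((Nat.gcd d m : ℕ) : ℤ) ∣ m := Int.natCast_dvd_natCast.2 (Nat.gcd_dvd_right d m)
  have hΔd : ((Nat.gcd d m : ℕ) : ℤ) ∣ d := Int.natCast_dvd_natCast.2 (Nat.gcd_dvd_left d m)
  constructor
  · rintro ⟨γ, rfl⟩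
    obtain ⟨⟨hB, h00⟩, hdiag, h21⟩ := (mem_stabLineGroup_iff hd γ).1 γ.2
    rw [coe_stabLineBlockHom,
      det_submatrix_succ_eq_of_det_eq_one hB (Matrix.SpecialLinearGroup.det_coe _) h00]
    refine ⟨h00, h21, ?_⟩
    simp only [submatrix_apply, Fin.succ_zero_eq_one]
    rw [show ∀ x y z : ℤ, y - x = -((x - y - d * z) + d * z) by intros; ring]
    exact (dvd_add (hΔm.trans hdiag) (hΔd.mul_right _)).neg_right
  · rintro ⟨hdet, h10, hΔ⟩
    obtain ⟨β, hβ⟩ := Int.exists_dvd_sub_mul_of_gcd_dvd (a := d) (b := m)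
      (t := (M : Matrix (Fin 2) (Fin 2) ℤ).det - M 0 0)
      (by rwa [Int.gcd_natCast_natCast, dvd_sub_comm])
    let B : SL3 := ⟨parabolicMk (M : Matrix (Fin 2) (Fin 2) ℤ).det ![β, 0] M, by
      rw [det_parabolicMk]
      rcases hdet with h | h <;> rw [h] <;> norm_num⟩
    have hmem : gMat d * B * (gMat d)⁻¹ ∈ stabLineGroup (d * m) d :=
      (gMat_conj_mem_stabLineGroup_iff hd B).2
        ⟨⟨parabolicMk_mem _ _ _, by simpa [B, parabolicMk] using hdet⟩,
          by simpa [B, parabolicMk] using hβ, by simpa [B, parabolicMk] using h10⟩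
    refine ⟨⟨_, hmem⟩, Units.ext ?_⟩
    rw [coe_stabLineBlockHom, gMat_inv_conj_conj]
    exact submatrix_succ_parabolicMk _ _ _

def stabLineKernelParam (hd : 0 < d) (k : ℤ) (hk : (m : ℤ) ∣ d * k) :
    Multiplicative (ℤ × ℤ) →* stabLineGroup (d * m) d where
  toFun z := ⟨gMat d * unipotentSL ![k * z.toAdd.1, z.toAdd.2] * (gMat d)⁻¹,
    (gMat_conj_mem_stabLineGroup_iff hd _).2
      ⟨⟨parabolicMk_mem _ _ _, by simp [unipotentSL, parabolicMk]⟩,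
        by simpa [unipotentSL, parabolicMk, ← mul_assoc] using (hk.mul_right z.toAdd.1).neg_right,
        by simp [unipotentSL, parabolicMk]⟩⟩
  map_one' := by
    ext : 1
    simp [← zero_empty]
  map_mul' z w := by
    ext : 1
    simp only [toAdd_mul, Prod.fst_add, Prod.snd_add, mul_add, Subgroup.coe_mul]
    rw [show ∀ a b a' b' : ℤ, ![a + a', b + b'] = ![a, b] + ![a', b'] by simp, unipotentSL_add]
    group

theorem coe_stabLineKernelParam (hd : 0 < d) (k : ℤ) (hk : (m : ℤ) ∣ d * k)
    (z : Multiplicative (ℤ × ℤ)) :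
    (stabLineKernelParam hd k hk z : SL3) =
      gMat d * unipotentSL ![k * z.toAdd.1, z.toAdd.2] * (gMat d)⁻¹ :=
  rfl

theorem stabLineKernelParam_injective (hd : 0 < d) {k : ℤ} (hk : (m : ℤ) ∣ d * k)
    (hk0 : k ≠ 0) : Function.Injective (stabLineKernelParam hd k hk) := by
  intro z w h
  have hU : gMat d * unipotentSL ![k * z.toAdd.1, z.toAdd.2] * (gMat d)⁻¹ =
      gMat d * unipotentSL ![k * w.toAdd.1, w.toAdd.2] * (gMat d)⁻¹ :=
    congrArg Subtype.val h
  have hv := unipotentSL_injective (by simpa using hU)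
  have h0 := congrFun hv 0
  have h1 := congrFun hv 1
  simp only [cons_val_zero, cons_val_one, mul_right_inj' hk0] at h0 h1
  exact Multiplicative.toAdd.injective (Prod.ext h0 h1)

theorem range_stabLineKernelParam (hd : 0 < d) (hm : 0 < m) :
    (stabLineKernelParam (m := m) hd ((m : ℤ) / Int.gcd m d)
      ((Int.dvd_mul_iff_ediv_gcd_dvd (by positivity)).2 dvd_rfl)).range =
      (stabLineBlockHom (d * m) d).ker := by
  ext γ
  rw [MonoidHom.mem_ker, Units.ext_iff, coe_stabLineBlockHom, Units.val_one]
  constructor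
  · rintro ⟨z, rfl⟩
    rw [coe_stabLineKernelParam, gMat_inv_conj_conj]
    exact submatrix_succ_parabolicMk _ _ _
  · intro hblock
    obtain ⟨⟨hB, h00⟩, hdiag, -⟩ := (mem_stabLineGroup_iff hd γ).1 γ.2
    set B : SL3 := (gMat d)⁻¹ * γ * gMat d
    have h00 : B 0 0 = 1 := by
      rw [← det_submatrix_succ_eq_of_det_eq_one hB (Matrix.SpecialLinearGroup.det_coe B) h00,
        hblock, det_one]
    have h11 : B 1 1 = 1 := congrFun (congrFun hblock 0) 0
    obtain ⟨t, ht⟩ : (m : ℤ) / Int.gcd m d ∣ B 0 1 := by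
      rw [← Int.dvd_mul_iff_ediv_gcd_dvd (by positivity),
        show d * B 0 1 = -(B 0 0 - B 1 1 - d * B 0 1) by rw [h00, h11]; ring]
      exact hdiag.neg_right
    refine ⟨Multiplicative.ofAdd (t, B 0 2), Subtype.ext ?_⟩
    rw [coe_stabLineKernelParam, ← gMat_conj_inv_conj d γ]
    congr 2
    refine Subtype.ext ((eq_parabolicMk hB).trans ?_).symm
    rw [h00, hblock]
    congr 1
    ext j
    fin_cases j
    exacts [ht, rfl]

noncomputable def stabLineBlockHomKerEquiv (hd : 0 < d) (hm : 0 < m) :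
    (stabLineBlockHom (d * m) d).ker ≃* Multiplicative (ℤ × ℤ) :=
  have hk0 : (m : ℤ) / Int.gcd m d ≠ 0 :=
    (Int.ediv_pos_of_pos_of_dvd (by positivity) (by positivity) (Int.gcd_dvd_left _ _)).ne'
  ((MonoidHom.ofInjective (stabLineKernelParam_injective hd _ hk0)).trans
    (MulEquiv.subgroupCongr (range_stabLineKernelParam hd hm))).symm

/-- **Statement 5.**  Let `d` be a positive divisor of `N` and `Δ = gcd(d, N/d)`.  With
`g_d = [[1,0,0],[d,1,0],[0,0,1]]` and `S` the subgroup of `Γ₀(N,3)` of elements fixing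
`(1,d,0)ᵀ` up to sign: (i) for `γ ∈ S` the matrix `g_d⁻¹ γ g_d` has vanishing `(2,1)` and
`(3,1)` entries; (ii) the map sending `γ` to the lower-right `2×2` block of `g_d⁻¹ γ g_d`
is a group homomorphism `S → GL₂(ℤ)`; (iii) its image is exactly `Γ₁(N/d, Δ)^*`; and
(iv) its kernel is isomorphic to `ℤ × ℤ`. -/
theorem stmt_5 (N d : ℕ) (hN : 0 < N) (hd0 : 0 < d) (hdN : d ∣ N) :
    (∀ γ ∈ stabLineGroup N d,
      (((gMat d)⁻¹ * γ * gMat d : SL3) : Matrix (Fin 3) (Fin 3) ℤ) 1 0 = 0 ∧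
      (((gMat d)⁻¹ * γ * gMat d : SL3) : Matrix (Fin 3) (Fin 3) ℤ) 2 0 = 0) ∧
    ∃ π : ↥(stabLineGroup N d) →* Matrix.GeneralLinearGroup (Fin 2) ℤ,
      (∀ γ : ↥(stabLineGroup N d),
        ((π γ : Matrix (Fin 2) (Fin 2) ℤ)) = Matrix.of fun i j : Fin 2 =>
          (((gMat d)⁻¹ * (γ : SL3) * gMat d : SL3) : Matrix (Fin 3) (Fin 3) ℤ)
            i.succ j.succ) ∧
      (∀ m : Matrix.GeneralLinearGroup (Fin 2) ℤ,
        m ∈ π.range ↔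
          (((m : Matrix (Fin 2) (Fin 2) ℤ).det = 1 ∨
            (m : Matrix (Fin 2) (Fin 2) ℤ).det = -1) ∧
           ((N / d : ℕ) : ℤ) ∣ (m : Matrix (Fin 2) (Fin 2) ℤ) 1 0 ∧
           ((Nat.gcd d (N / d) : ℕ) : ℤ) ∣
             ((m : Matrix (Fin 2) (Fin 2) ℤ) 0 0 - (m : Matrix (Fin 2) (Fin 2) ℤ).det))) ∧
      Nonempty (↥π.ker ≃* Multiplicative (ℤ × ℤ)) := by
  obtain ⟨m, rfl⟩ := hdN
  rw [Nat.mul_div_cancel_left m hd0]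
  refine ⟨fun γ hγ => ⟨gMat_inv_conj_mem_parabolic hγ 0, gMat_inv_conj_mem_parabolic hγ 1⟩,
    stabLineBlockHom (d * m) d, fun γ => rfl, mem_range_stabLineBlockHom_iff hd0,
    ⟨stabLineBlockHomKerEquiv hd0 (Nat.pos_of_mul_pos_left hN)⟩⟩
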